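/- Assume there exist θ > 0 with g(θ) < m and δ > 0 such that ρ₀ ∈ C_b(ℝ^d) satisfies 0 ≤ ρ₀(x) ≤ θ − δ for all x ∈ ℝ^d. Then the solution of the kinetic equation satisfies 0 ≤ ρ_t(x) ≤ θ for all t > 0 and all x ∈ ℝ^d. -/

import Mathlib

open MeasureTheory Filter Set Topology
open scoped ENNReal

noncomputable section

abbrev Rd (d : ℕ) := Fin d → ℝ

/-- the convolution `(a ∗ ρ)(x) = ∫ a(x−y) ρ(y) dy` -/
def conv {d : ℕ} (a ρ : Rd d → ℝ) (x : Rd d) : ℝ := ∫ y : Rd d, a (x - y) * ρ y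

/-- the right-hand side of the kinetic equation:
`−m ρ − (a⁻ ∗ ρ) ρ + (a⁺ ∗ ρ)`. -/
def KRHS {d : ℕ} (m : ℝ) (ap am : Rd d → ℝ) (ρ : Rd d → ℝ) : Rd d → ℝ :=
  fun x => -m * ρ x - conv am ρ x * ρ x + conv ap ρ x

/-- classical solution of the kinetic equation on the time set `I`, continuously
differentiable with respect to the `L∞`-norm. -/
structure KinSol {d : ℕ} (m : ℝ) (ap am : Rd d → ℝ) (I : Set ℝ)
    (ρ0 : Rd d → ℝ) (ρ : ℝ → Rd d → ℝ) : Prop where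
  init : ρ 0 =ᵐ[volume] ρ0
  meas : ∀ t ∈ I, AEStronglyMeasurable (ρ t) volume
  bdd : ∀ t ∈ I, eLpNorm (ρ t) ⊤ volume < ⊤
  hasDeriv : ∀ t ∈ I,
    Tendsto (fun h : ℝ =>
        eLpNorm (ρ (t + h) - ρ t - h • KRHS m ap am (ρ t)) ⊤ volume /
          ENNReal.ofReal |h|)
      (𝓝[{h : ℝ | h ≠ 0 ∧ t + h ∈ I}] 0) (𝓝 0)
  contDeriv : ∀ t ∈ I,
    Tendsto (fun s : ℝ =>
        eLpNorm (KRHS m ap am (ρ s) - KRHS m ap am (ρ t)) ⊤ volume)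
      (𝓝[I] t) (𝓝 0)

/-- `Υ_θ = {x : a⁺(x) > θ a⁻(x)}` -/
def Ups {d : ℕ} (ap am : Rd d → ℝ) (θ : ℝ) : Set (Rd d) := {x | θ * am x < ap x}

/-- `g(θ) = f⁺(θ) − θ f⁻(θ)` where `f^±(θ) = ∫_{Υ_θ} a^±(x) dx` -/
def gfun {d : ℕ} (ap am : Rd d → ℝ) (θ : ℝ) : ℝ :=
  (∫ x in Ups ap am θ, ap x) - θ * ∫ x in Ups ap am θ, am x

/-!
Where `0 ≤ ρ ≤ θ`, splitting the convolution integral over `Υ_θ` and its complement gives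
`a⁺ ∗ ρ ≤ θ (a⁻ ∗ ρ) + θ g(θ)`, hence the affine bound
`KRHS ρ x ≤ θ (g(θ) - m) + (m + θ ⟨a⁻⟩) (θ - ρ x)`. As `g(θ) < m`, an explicit Euler step
`ρ + h KRHS ρ` started below a level `θ - ε` (with `ε ≤ δ` small) ends below `θ - ε - c h` for
some `c > 0`, while the `L∞`-derivative says that `ρ_{t+h}` differs from this Euler step by
`o(h)`; continuity of `ρ_{t+h}` upgrades the resulting a.e. bound to a pointwise one. So the
set of times at which `ρ_t ≤ θ - ε` is pushed forward, and it is closed because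
`L∞`-differentiability makes `t ↦ ρ_t x` continuous; it therefore contains all of `[0, ∞)`.
-/
section Continuity

variable {X : Type*} [TopologicalSpace X] [MeasurableSpace X] {μ : Measure X} [μ.IsOpenPosMeasure]

theorem le_of_ae_le_of_continuous {Y : Type*} [TopologicalSpace Y] [PartialOrder Y]
    [OrderClosedTopology Y] {f g : X → Y} (hf : Continuous f) (hg : Continuous g)
    (h : f ≤ᵐ[μ] g) : f ≤ g := fun x => by
  have hx : x ∈ closure {x | f x ≤ g x} := (Measure.dense_of_ae h).closure_eq ▸ mem_univ x
  rwa [(isClosed_le hf hg).closure_eq] at hx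

theorem Continuous.enorm_le_eLpNorm_top {E : Type*} [NormedAddCommGroup E] {f : X → E}
    (hf : Continuous f) (x : X) : ‖f x‖ₑ ≤ eLpNorm f ⊤ μ :=
  le_of_ae_le_of_continuous (μ := μ) hf.enorm continuous_const
    (by rw [eLpNorm_exponent_top]; exact ae_le_eLpNormEssSup) x

end Continuity

theorem ae_abs_le_of_eLpNorm_top_le {X : Type*} [MeasurableSpace X] {μ : Measure X}
    {f : X → ℝ} {r : ℝ} (hr : 0 ≤ r) (h : eLpNorm f ⊤ μ ≤ ENNReal.ofReal r) :
    ∀ᵐ x ∂μ, |f x| ≤ r := by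
  filter_upwards [ae_le_eLpNormEssSup (f := f) (μ := μ)] with x hx
  rw [← eLpNorm_exponent_top, Real.enorm_eq_ofReal_abs] at hx
  exact (ENNReal.ofReal_le_ofReal_iff hr).1 (hx.trans h)

section TimeDerivative

variable {X : Type*} [MeasurableSpace X] {μ : Measure X} {f : ℝ → X → ℝ} {v : X → ℝ} {t : ℝ}

theorem eLpNorm_top_add_le {E : Type*} [NormedAddCommGroup E] (f g : X → E) :
    eLpNorm (f + g) ⊤ μ ≤ eLpNorm f ⊤ μ + eLpNorm g ⊤ μ := by
  simpa only [eLpNorm_exponent_top] using eLpNormEssSup_add_le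

theorem eventually_eLpNorm_le_of_tendsto {L : Filter ℝ} (hL : ∀ᶠ h in L, h ≠ 0)
    (hderiv : Tendsto (fun h : ℝ =>
      eLpNorm (f (t + h) - f t - h • v) ⊤ μ / ENNReal.ofReal |h|) L (𝓝 0))
    {c : ℝ} (hc : 0 < c) :
    ∀ᶠ h in L, eLpNorm (f (t + h) - f t - h • v) ⊤ μ ≤ ENNReal.ofReal (c * |h|) := by
  filter_upwards [hderiv.eventually_lt_const (ENNReal.ofReal_pos.2 hc), hL] with h hlt hh
  rw [ENNReal.div_lt_iff (Or.inl (by simpa using hh)) (Or.inl ENNReal.ofReal_ne_top),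
    ← ENNReal.ofReal_mul hc.le] at hlt
  exact hlt.le

/-- The derivative `v` is automatically essentially bounded: `h • v` is a sum of three
essentially bounded functions for any admissible `h ≠ 0`. -/
theorem tendsto_eLpNorm_sub_of_tendsto {L : Filter ℝ} [L.NeBot] (hL0 : L ≤ 𝓝 0)
    (hL : ∀ᶠ h in L, h ≠ 0 ∧ eLpNorm (f (t + h)) ⊤ μ < ⊤) (ht : eLpNorm (f t) ⊤ μ < ⊤)
    (hderiv : Tendsto (fun h : ℝ =>
      eLpNorm (f (t + h) - f t - h • v) ⊤ μ / ENNReal.ofReal |h|) L (𝓝 0)) :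
    Tendsto (fun h => eLpNorm (f (t + h) - f t) ⊤ μ) L (𝓝 0) := by
  have hle := eventually_eLpNorm_le_of_tendsto (hL.mono fun _ => And.left) hderiv one_pos
  have hv : eLpNorm v ⊤ μ ≠ ⊤ := by
    obtain ⟨h, ⟨hh, hfin⟩, hrem⟩ := (hL.and hle).exists
    have hsmul : h • v = f (t + h) + -f t + -(f (t + h) - f t - h • v) := by abel
    have hlt : eLpNorm (h • v) ⊤ μ < ⊤ := by
      rw [hsmul]
      refine ((eLpNorm_top_add_le _ _).trans
        (add_le_add_left (eLpNorm_top_add_le _ _) _)).trans_lt ?_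
      rw [eLpNorm_neg, eLpNorm_neg]
      exact ENNReal.add_lt_top.2 ⟨ENNReal.add_lt_top.2 ⟨hfin, ht⟩,
        hrem.trans_lt ENNReal.ofReal_lt_top⟩
    rw [eLpNorm_const_smul] at hlt
    exact (ENNReal.lt_top_of_mul_ne_top_right hlt.ne (by simpa using hh)).ne
  have hbound : ∀ᶠ h in L, eLpNorm (f (t + h) - f t) ⊤ μ
      ≤ ENNReal.ofReal |h| * (1 + eLpNorm v ⊤ μ) := by
    filter_upwards [hle] with h hh
    calc eLpNorm (f (t + h) - f t) ⊤ μ = eLpNorm ((f (t + h) - f t - h • v) + h • v) ⊤ μ := by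
          rw [sub_add_cancel]
      _ ≤ eLpNorm (f (t + h) - f t - h • v) ⊤ μ + eLpNorm (h • v) ⊤ μ := eLpNorm_top_add_le _ _
      _ ≤ ENNReal.ofReal |h| + ENNReal.ofReal |h| * eLpNorm v ⊤ μ := by
          rw [eLpNorm_const_smul, Real.enorm_eq_ofReal_abs]
          gcongr
          simpa using hh
      _ = ENNReal.ofReal |h| * (1 + eLpNorm v ⊤ μ) := by ring
  have hlim : Tendsto (fun h : ℝ => ENNReal.ofReal |h| * (1 + eLpNorm v ⊤ μ)) L (𝓝 0) := by
    have habs : Tendsto (fun h : ℝ => ENNReal.ofReal |h|) L (𝓝 0) := by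
      simpa [Function.comp_def] using
        ((ENNReal.continuous_ofReal.comp continuous_abs).tendsto 0).mono_left hL0
    simpa using ENNReal.Tendsto.mul_const habs
      (Or.inr (ENNReal.add_ne_top.2 ⟨ENNReal.one_ne_top, hv⟩))
  exact tendsto_of_tendsto_of_tendsto_of_le_of_le' tendsto_const_nhds hlim
    (Eventually.of_forall fun _ => zero_le) hbound

theorem continuousWithinAt_apply_of_tendsto_eLpNorm [TopologicalSpace X] [μ.IsOpenPosMeasure]
    {I : Set ℝ} (hcont : ∀ u ∈ I, Continuous (f u)) (ht : t ∈ I)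
    (hlim : Tendsto (fun h => eLpNorm (f (t + h) - f t) ⊤ μ)
      (𝓝[{h | h ≠ 0 ∧ t + h ∈ I}] 0) (𝓝 0)) (x : X) :
    ContinuousWithinAt (fun u => f u x) I t := by
  rw [← continuousWithinAt_sdiff_self, ContinuousWithinAt, tendsto_iff_edist_tendsto_0]
  have hshift : Tendsto (fun u => u - t) (𝓝[I \ {t}] t) (𝓝[{h | h ≠ 0 ∧ t + h ∈ I}] 0) := by
    refine tendsto_nhdsWithin_iff.2 ⟨?_, eventually_nhdsWithin_of_forall fun u hu =>
      ⟨sub_ne_zero.2 hu.2, by simpa using hu.1⟩⟩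
    exact ((continuous_sub_right t).tendsto' t 0 (sub_self t)).mono_left nhdsWithin_le_nhds
  refine tendsto_of_tendsto_of_tendsto_of_le_of_le' tendsto_const_nhds (hlim.comp hshift)
    (Eventually.of_forall fun _ => zero_le) ?_
  filter_upwards [self_mem_nhdsWithin] with u hu
  rw [edist_eq_enorm_sub, Function.comp_apply, add_sub_cancel]
  exact ((hcont u hu.1).sub (hcont t ht)).enorm_le_eLpNorm_top x

theorem eventually_forall_le_of_tendsto [TopologicalSpace X] [μ.IsOpenPosMeasure] {c M : ℝ}
    (hc : 0 < c)
    (hderiv : Tendsto (fun h : ℝ =>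
      eLpNorm (f (t + h) - f t - h • v) ⊤ μ / ENNReal.ofReal |h|) (𝓝[>] 0) (𝓝 0))
    (hcont : ∀ᶠ h in 𝓝[>] 0, Continuous (f (t + h)))
    (hdrift : ∀ᶠ h in 𝓝[>] 0, ∀ x, f t x + h * v x ≤ M - h * c) :
    ∀ᶠ h in 𝓝[>] 0, ∀ x, f (t + h) x ≤ M := by
  have hpos : ∀ᶠ h in 𝓝[>] (0 : ℝ), 0 < h := self_mem_nhdsWithin
  filter_upwards [eventually_eLpNorm_le_of_tendsto (hpos.mono fun _ => ne_of_gt) hderiv hc,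
    hcont, hdrift, hpos] with h herr hcont hdrift hpos
  refine le_of_ae_le_of_continuous (μ := μ) hcont continuous_const ?_
  filter_upwards [ae_abs_le_of_eLpNorm_top_le (by positivity) herr] with x hx
  simp only [Pi.sub_apply, Pi.smul_apply, smul_eq_mul, abs_of_pos hpos] at hx
  linarith [(abs_le.1 hx).2, hdrift x]

end TimeDerivative

theorem forall_le_of_eventually_forall_le {ι : Type*} {F : ℝ → ι → ℝ} {a M : ℝ}
    (hF : ∀ i, ContinuousOn (fun t => F t i) (Ici a)) (ha : ∀ i, F a i ≤ M)
    (hstep : ∀ t, a ≤ t → (∀ i, F t i ≤ M) → ∀ᶠ h in 𝓝[>] 0, ∀ i, F (t + h) i ≤ M)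
    {t : ℝ} (ht : a ≤ t) (i : ι) : F t i ≤ M := by
  set s := {t | ∀ i, F t i ≤ M}
  have hclosed : IsClosed (s ∩ Icc a t) := by
    have hs : s ∩ Icc a t = ⋂ i, Icc a t ∩ (fun u => F u i) ⁻¹' Iic M := by
      ext u
      simp only [s, mem_inter_iff, mem_ofPred_eq, mem_iInter, mem_preimage, mem_Iic]
      exact ⟨fun ⟨hu, hI⟩ i => ⟨hI, hu i⟩, fun h => ⟨fun i => (h i).2, (h i).1⟩⟩
    rw [hs]
    exact isClosed_iInter fun i => ((hF i).mono Icc_subset_Ici_self).preimage_isClosed_of_isClosed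
      isClosed_Icc isClosed_Iic
  refine hclosed.Icc_subset_of_forall_exists_gt ha (fun u hu y hy => ?_) ⟨ht, le_rfl⟩ i
  obtain ⟨h, hh, hpos, hlt⟩ :=
    ((hstep u hu.2.1 hu.1).and (Ioo_mem_nhdsGT (sub_pos.2 hy))).exists
  exact ⟨u + h, hh, by linarith, by linarith⟩

section Convolution

variable {d : ℕ} {a ap am ρ : Rd d → ℝ}

theorem integrable_conv_integrand (ha : Integrable a volume)
    (hρ : AEStronglyMeasurable ρ volume) {M : ℝ} (hρM : ∀ y, |ρ y| ≤ M) (x : Rd d) :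
    Integrable (fun y => a (x - y) * ρ y) volume :=
  (ha.comp_sub_left x).mul_bdd hρ (Eventually.of_forall hρM)

theorem conv_le_mul_integral (ha : Integrable a volume) (ha0 : ∀ᵐ z ∂volume, 0 ≤ a z)
    (hρ : AEStronglyMeasurable ρ volume) {M : ℝ} (hρ0 : ∀ y, 0 ≤ ρ y) (hρM : ∀ y, ρ y ≤ M)
    (x : Rd d) : conv a ρ x ≤ M * ∫ z, a z := by
  have ha0x : ∀ᵐ y ∂volume, 0 ≤ a (x - y) :=
    (eventually_map (m := fun y => x - y) (P := fun z => 0 ≤ a z)).1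
      (by rwa [Measure.map_sub_left_ae])
  calc conv a ρ x ≤ ∫ y, M * a (x - y) := by
        refine integral_mono_ae (integrable_conv_integrand ha hρ
          (fun y => abs_le.2 ⟨by linarith [hρ0 y, hρM y], hρM y⟩) x)
          ((ha.comp_sub_left x).const_mul M) ?_
        filter_upwards [ha0x] with y hy
        nlinarith [hρM y]
    _ = M * ∫ z, a z := by rw [integral_const_mul, integral_sub_left_eq_self a volume x]

/-- On `Υ_θ` the integrand `(a⁺ - θ a⁻)(x - y) ρ(y)` is at most `θ (a⁺ - θ a⁻)(x - y)`, and
elsewhere it is nonpositive; integrating gives `θ g(θ)`. -/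
theorem conv_le_mul_conv_add_gfun (hap : Integrable ap volume) (ham : Integrable am volume)
    (hρ : AEStronglyMeasurable ρ volume) {θ : ℝ} (hρ0 : ∀ y, 0 ≤ ρ y) (hρθ : ∀ y, ρ y ≤ θ)
    (x : Rd d) : conv ap ρ x ≤ θ * conv am ρ x + θ * gfun ap am θ := by
  set A : Rd d → ℝ := fun z => ap z - θ * am z
  have hρb : ∀ y, |ρ y| ≤ θ := fun y => abs_le.2 ⟨by linarith [hρ0 y, hρθ y], hρθ y⟩
  have hAint : Integrable A volume := hap.sub (ham.const_mul θ)
  have hconv : conv ap ρ x - θ * conv am ρ x = ∫ y, A (x - y) * ρ y := by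
    unfold conv
    rw [← integral_const_mul, ← integral_sub (integrable_conv_integrand hap hρ hρb x)
      ((integrable_conv_integrand ham hρ hρb x).const_mul θ)]
    congr 1
    ext y
    ring
  have hUps : NullMeasurableSet (Ups ap am θ) volume :=
    nullMeasurableSet_lt (ham.aemeasurable.const_mul θ) hap.aemeasurable
  have hgfun : ∫ z, (Ups ap am θ).indicator A z = gfun ap am θ := by
    rw [integral_indicator₀ hUps, integral_sub hap.integrableOn
      (ham.integrableOn.const_mul θ), integral_const_mul]
    rfl
  have hle : ∫ y, A (x - y) * ρ y ≤ ∫ y, θ * (Ups ap am θ).indicator A (x - y) := by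
    refine integral_mono (hAint.comp_sub_left x |>.mul_bdd hρ (Eventually.of_forall hρb))
      (((hAint.indicator₀ hUps).comp_sub_left x).const_mul θ) fun y => ?_
    by_cases hy : x - y ∈ Ups ap am θ
    · have hA : 0 < A (x - y) := sub_pos.2 hy
      rw [indicator_of_mem hy, mul_comm θ]
      exact mul_le_mul_of_nonneg_left (hρθ y) hA.le
    · have hA : A (x - y) ≤ 0 := sub_nonpos.2 (not_lt.1 hy)
      rw [indicator_of_notMem hy, mul_zero]
      exact mul_nonpos_of_nonpos_of_nonneg hA (hρ0 y)
  rw [integral_const_mul, integral_sub_left_eq_self _ volume x, hgfun] at hle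
  linarith

end Convolution

section Kinetic

variable {d : ℕ} {ap am ρ : Rd d → ℝ}

theorem KRHS_le (hap : Integrable ap volume) (ham : Integrable am volume)
    (ham0 : ∀ᵐ z ∂volume, 0 ≤ am z) (hρ : AEStronglyMeasurable ρ volume) {θ : ℝ}
    (hρ0 : ∀ y, 0 ≤ ρ y) (hρθ : ∀ y, ρ y ≤ θ) (m : ℝ) (x : Rd d) :
    KRHS m ap am ρ x ≤ θ * (gfun ap am θ - m) + (m + θ * ∫ z, am z) * (θ - ρ x) := by
  have hconv_ap := conv_le_mul_conv_add_gfun hap ham hρ hρ0 hρθ x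
  have hconv_am := mul_le_mul_of_nonneg_right (conv_le_mul_integral ham ham0 hρ hρ0 hρθ x)
    (sub_nonneg.2 (hρθ x))
  simp only [KRHS]
  linarith

theorem eventually_add_mul_KRHS_le (hap : Integrable ap volume) (ham : Integrable am volume)
    (ham0 : ∀ᵐ z ∂volume, 0 ≤ am z) (hρ : AEStronglyMeasurable ρ volume) {m θ ε c : ℝ}
    (hρ0 : ∀ y, 0 ≤ ρ y) (hρε : ∀ y, ρ y ≤ θ - ε) (hε : 0 ≤ ε)
    (hεc : (m + θ * ∫ z, am z) * ε + c ≤ θ * (m - gfun ap am θ)) :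
    ∀ᶠ h in 𝓝[>] 0, ∀ x, ρ x + h * KRHS m ap am ρ x ≤ θ - ε - h * c := by
  set B := m + θ * ∫ z, am z
  have hsmall : ∀ᶠ h in 𝓝[>] (0 : ℝ), h * B ≤ 1 := nhdsWithin_le_nhds
    (((continuous_mul_const B).tendsto' 0 0 (zero_mul B)).eventually (eventually_le_nhds one_pos))
  filter_upwards [hsmall, self_mem_nhdsWithin] with h hB hpos x
  have hK := mul_le_mul_of_nonneg_left
    (KRHS_le hap ham ham0 hρ hρ0 (fun y => (hρε y).trans (sub_le_self θ hε)) m x) hpos.le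
  have hcontract : h * B * (θ - ε - ρ x) ≤ θ - ε - ρ x :=
    mul_le_of_le_one_left (sub_nonneg.2 (hρε x)) hB
  have hmargin := mul_le_mul_of_nonneg_left hεc hpos.le
  linarith

end Kinetic

theorem statement13_general
    (d : ℕ) (m : ℝ)
    (aplus aminus : Rd d → ℝ)
    (hap_int : Integrable aplus volume) (ham_int : Integrable aminus volume)
    (ham_pos : ∀ᵐ x ∂volume, 0 ≤ aminus x)
    (θ : ℝ) (hθ : 0 < θ) (hgθ : gfun aplus aminus θ < m)
    (δ : ℝ) (hδ : 0 < δ)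
    (ρ0 : Rd d → ℝ)
    (ρ : ℝ → Rd d → ℝ)
    (hsol : KinSol m aplus aminus (Set.Ici 0) ρ0 ρ)
    (hρ_init : ρ 0 = ρ0)
    (hρ_cont : ∀ t ∈ Set.Ici (0 : ℝ), Continuous (ρ t))
    (hρ_pos : ∀ t ∈ Set.Ici (0 : ℝ), ∀ x, 0 ≤ ρ t x)
    (hρ0_le : ∀ x, ρ0 x ≤ θ - δ) :
    ∀ t, 0 < t → ∀ x, ρ t x ≤ θ := by
  obtain ⟨-, hmeas, hbdd, hderiv, -⟩ := hsol
  have hfwd : ∀ t ∈ Ici (0 : ℝ), 𝓝[>] (0 : ℝ) ≤ 𝓝[{h | h ≠ 0 ∧ t + h ∈ Ici 0}] 0 :=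
    fun t ht => nhdsWithin_mono _ fun h hh =>
      ⟨ne_of_gt hh, mem_Ici.2 (add_nonneg ht (le_of_lt hh))⟩
  have htime : ∀ x, ContinuousOn (fun u => ρ u x) (Ici 0) := fun x t ht =>
    haveI := (nhdsGT_neBot (0 : ℝ)).mono (hfwd t ht)
    continuousWithinAt_apply_of_tendsto_eLpNorm hρ_cont ht
      (tendsto_eLpNorm_sub_of_tendsto nhdsWithin_le_nhds
        (eventually_nhdsWithin_of_forall fun h hh => ⟨hh.1, hbdd _ hh.2⟩) (hbdd t ht)
        (hderiv t ht)) x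
  set c := θ * (m - gfun aplus aminus θ) / 2 with hc_def
  have hc : 0 < c := by have := sub_pos.2 hgθ; positivity
  set B := m + θ * ∫ z, aminus z
  have hsmall : ∀ᶠ ε in 𝓝[>] (0 : ℝ), (ε ≤ δ ∧ B * ε ≤ c) ∧ 0 < ε :=
    (((eventually_le_nhds hδ).and (((continuous_const_mul B).tendsto' 0 0 (mul_zero B)).eventually
      (eventually_le_nhds hc))).filter_mono nhdsWithin_le_nhds).and self_mem_nhdsWithin
  obtain ⟨ε, ⟨hεδ, hεB⟩, hε⟩ := hsmall.exists
  have hinv : ∀ t, 0 ≤ t → ∀ x, ρ t x ≤ θ - ε := fun t ht =>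
    forall_le_of_eventually_forall_le htime (fun x => by rw [hρ_init]; linarith [hρ0_le x])
      (fun s hs hρs => eventually_forall_le_of_tendsto hc ((hderiv s hs).mono_left (hfwd s hs))
        (eventually_nhdsWithin_of_forall fun h hh =>
          hρ_cont _ (mem_Ici.2 (add_nonneg hs (le_of_lt hh))))
        (eventually_add_mul_KRHS_le hap_int ham_int ham_pos (hmeas s hs) (hρ_pos s hs) hρs
          hε.le (by linarith))) ht
  exact fun t ht x => (hinv t ht.le x).trans (by linarith)

theorem statement13
    (d : ℕ) (hd : 1 ≤ d) (m : ℝ) (hm : 0 ≤ m)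
    (aplus aminus : Rd d → ℝ)
    (hap_int : Integrable aplus volume) (ham_int : Integrable aminus volume)
    (hap_bdd : eLpNorm aplus ⊤ volume < ⊤) (ham_bdd : eLpNorm aminus ⊤ volume < ⊤)
    (hap_even : ∀ᵐ x ∂volume, aplus (-x) = aplus x)
    (ham_even : ∀ᵐ x ∂volume, aminus (-x) = aminus x)
    (hap_pos : ∀ᵐ x ∂volume, 0 ≤ aplus x)
    (ham_pos : ∀ᵐ x ∂volume, 0 ≤ aminus x)
    (hap_meas : Measurable aplus) (ham_meas : Measurable aminus)
    (θ : ℝ) (hθ : 0 < θ) (hgθ : gfun aplus aminus θ < m)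
    (δ : ℝ) (hδ : 0 < δ)
    (ρ0 : Rd d → ℝ) (hρ0_cont : Continuous ρ0)
    (hρ0_bdd : ∃ M : ℝ, ∀ x, ρ0 x ≤ M)
    (hρ0_pos : ∀ x, 0 ≤ ρ0 x)
    (ρ : ℝ → Rd d → ℝ)
    (hsol : KinSol m aplus aminus (Set.Ici 0) ρ0 ρ)
    (hρ_init : ρ 0 = ρ0)
    (hρ_cont : ∀ t ∈ Set.Ici (0 : ℝ), Continuous (ρ t))
    (hρ_pos : ∀ t ∈ Set.Ici (0 : ℝ), ∀ x, 0 ≤ ρ t x)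
    (hρ0_le : ∀ x, ρ0 x ≤ θ - δ) :
    ∀ t, 0 < t → ∀ x, ρ t x ≤ θ :=
  statement13_general d m aplus aminus hap_int ham_int ham_pos θ hθ hgθ δ hδ ρ0 ρ hsol hρ_init
    hρ_cont hρ_pos hρ0_le
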